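/- arXiv:1312.2056 — 6 statements merged into one kernel-verified Lean document; each statement's English description precedes it below -/
import Mathlib

section
/- Let X be a compact metric space with probability measure μ, and let d be the metric on M(X) defined by d(μ,ν) = Σₙ |∫fₙ dμ − ∫fₙ dν| / (2ⁿ(‖fₙ‖+1)) for a dense sequence {fₙ} in C(X,ℝ). If A, B are Borel subsets of X with μ(A) > 0, μ(B) > 0, and μ(A △ B) < μ(A)·ε, then d(μ_A, μ_B) ≤ 2ε. -/
/-!
For a continuous `g`, write `∫ g dμ_A - ∫ g dμ_B` as `(∫_A g - ∫_B g) / μ A` plus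
`(1 / μ A - 1 / μ B) ∫_B g`. Both pieces are at most `‖g‖ μ(A ∆ B) / μ A`, because `∫_A g` and
`∫_B g` differ only on `A ∆ B` and `|μ A - μ B| ≤ μ(A ∆ B)`. The weights
`1 / (2 ^ (m + 1) (‖f m‖ + 1))` then sum these bounds to at most `2 ε`.
-/

open MeasureTheory Topology Set Function TopologicalSpace

noncomputable section

namespace Paper

/-- The orbit closure of a point. -/
def orbitClosure {α : Type*} [TopologicalSpace α] (T : α → α) (x : α) : Set α :=
  closure (Set.range fun n : ℕ => T^[n] x)

/-- Topological transitivity: `N(U,V)` is infinite for all non-empty open `U, V`. -/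
def IsTransitive {α : Type*} [TopologicalSpace α] (T : α → α) : Prop :=
  ∀ U V : Set α, IsOpen U → U.Nonempty → IsOpen V → V.Nonempty →
    {n : ℕ | (U ∩ T^[n] ⁻¹' V).Nonempty}.Infinite

/-- Weak mixing: the product system is transitive. -/
def IsWeaklyMixing {α : Type*} [TopologicalSpace α] (T : α → α) : Prop :=
  IsTransitive (Prod.map T T)

/-- Total transitivity. -/
def IsTotallyTransitive {α : Type*} [TopologicalSpace α] (T : α → α) : Prop :=
  ∀ n : ℕ, 0 < n → IsTransitive (T^[n])

/-- A minimal point: its orbit closure is a minimal subsystem. -/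
def IsMinimalPoint {α : Type*} [TopologicalSpace α] (T : α → α) (x : α) : Prop :=
  ∀ Y : Set α, Y.Nonempty → IsClosed Y → MapsTo T Y Y → Y ⊆ orbitClosure T x →
    Y = orbitClosure T x

def IsPeriodicPoint {α : Type*} (T : α → α) (x : α) : Prop :=
  ∃ n : ℕ, 0 < n ∧ T^[n] x = x

def IsPeriodicSystem {α : Type*} (T : α → α) : Prop :=
  ∃ m : ℕ, 0 < m ∧ T^[m] = id

def IsPointwisePeriodic {α : Type*} (T : α → α) : Prop :=
  ∀ x : α, IsPeriodicPoint T x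

def IsMSystem {α : Type*} [TopologicalSpace α] (T : α → α) : Prop :=
  IsTransitive T ∧ Dense {x : α | IsMinimalPoint T x}

def IsPSystem {α : Type*} [TopologicalSpace α] (T : α → α) : Prop :=
  IsTransitive T ∧ Dense {x : α | IsPeriodicPoint T x}

/-- An E-system: transitive with an invariant (Borel) probability measure of full support. -/
def IsESystem {α : Type*} [TopologicalSpace α] (T : α → α) : Prop :=
  IsTransitive T ∧
    let _i : MeasurableSpace α := borel α
    ∃ μ : Measure α, IsProbabilityMeasure μ ∧ μ.map T = μ ∧
      ∀ U : Set α, IsOpen U → U.Nonempty → 0 < μ U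

/-- A proximal pair: the orbit closure of `(x, y)` meets the diagonal. -/
def IsProximalPair {α : Type*} [TopologicalSpace α] (T : α → α) (x y : α) : Prop :=
  ∃ z : α, (z, z) ∈ closure (Set.range fun n : ℕ => (T^[n] x, T^[n] y))

def IsDistalPoint {α : Type*} [TopologicalSpace α] (T : α → α) (x : α) : Prop :=
  ∀ y ∈ orbitClosure T x, IsProximalPair T x y → y = x

def IsDistalSystem {α : Type*} [TopologicalSpace α] (T : α → α) : Prop :=
  ∀ x y : α, IsProximalPair T x y → x = y

/-- The induced map on the hyperspace of non-empty compact (= closed) subsets. -/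
def TK {α : Type*} [TopologicalSpace α] (T : α → α) (hT : Continuous T)
    (C : NonemptyCompacts α) : NonemptyCompacts α :=
  ⟨⟨T '' (C : Set α), C.isCompact.image hT⟩, C.nonempty.image T⟩

/-- The induced map on the space of Borel probability measures. -/
def TM {α : Type*} [TopologicalSpace α] [MeasurableSpace α] [BorelSpace α] (T : α → α)
    (hT : Continuous T) (μ : ProbabilityMeasure α) : ProbabilityMeasure α :=
  μ.map hT.measurable.aemeasurable

/-- Almost dense periodic sets. -/
def AlmostDensePeriodicSets {α : Type*} [TopologicalSpace α] (T : α → α) : Prop :=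
  let _i : MeasurableSpace α := borel α
  ∀ U : Set α, IsOpen U → U.Nonempty → ∀ ε : ℝ, 0 < ε →
    ∃ k : ℕ, 0 < k ∧ ∃ μ : Measure α, IsProbabilityMeasure μ ∧ μ.map (T^[k]) = μ ∧
      μ Uᶜ < ENNReal.ofReal ε

def IsAlmostHYSystem {α : Type*} [TopologicalSpace α] (T : α → α) : Prop :=
  IsTotallyTransitive T ∧ AlmostDensePeriodicSets T

def IsFactorMap {α β : Type*} [TopologicalSpace α] [TopologicalSpace β]
    (T : α → α) (S : β → β) (π : α → β) : Prop :=
  Continuous π ∧ Surjective π ∧ π ∘ T = S ∘ π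

def IsJoining {α β : Type*} [TopologicalSpace α] [TopologicalSpace β]
    (T : α → α) (S : β → β) (J : Set (α × β)) : Prop :=
  J.Nonempty ∧ IsClosed J ∧ MapsTo (Prod.map T S) J J ∧
    Prod.fst '' J = Set.univ ∧ Prod.snd '' J = Set.univ

def AreDisjoint {α β : Type*} [TopologicalSpace α] [TopologicalSpace β]
    (T : α → α) (S : β → β) : Prop :=
  ∀ J : Set (α × β), IsJoining T S J → J = Set.univ

def IsMinimalSystem {β : Type*} [TopologicalSpace β] (S : β → β) : Prop :=
  ∀ Y : Set β, Y.Nonempty → IsClosed Y → MapsTo S Y Y → Y = Set.univ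

/-- Disjoint from every minimal system (on a compact metric space). -/
def DisjointFromAllMinimal {α : Type*} [TopologicalSpace α] (T : α → α) : Prop :=
  ∀ (β : Type) (_ : MetricSpace β) (_ : CompactSpace β) (S : β → β),
    Continuous S → Surjective S → IsMinimalSystem S → AreDisjoint T S

open scoped symmDiff ProbabilityTheory

section ConditionalIntegrals

variable {Ω : Type*} [MeasurableSpace Ω] {μ : Measure Ω} {g : Ω → ℝ} {M : ℝ} {A B : Set Ω}

theorem integral_cond_eq_inv_mul_setIntegral :
    ∫ x, g x ∂μ[|A] = (μ.real A)⁻¹ * ∫ x in A, g x ∂μ := by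
  rw [ProbabilityTheory.cond, integral_smul_measure, ENNReal.toReal_inv, smul_eq_mul,
    measureReal_def]

variable [IsFiniteMeasure μ]

theorem abs_setIntegral_sub_setIntegral_le_mul_measureReal_symmDiff (hg : Integrable g μ)
    (hgM : ∀ x, ‖g x‖ ≤ M) (hA : MeasurableSet A) (hB : MeasurableSet B) :
    |∫ x in A, g x ∂μ - ∫ x in B, g x ∂μ| ≤ M * μ.real (A ∆ B) := by
  have hsplitA := integral_inter_add_sdiff hB (hg.integrableOn (s := A))
  have hsplitB := integral_inter_add_sdiff hA (hg.integrableOn (s := B))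
  rw [inter_comm] at hsplitB
  have hle (s : Set Ω) : |∫ x in s, g x ∂μ| ≤ M * μ.real s :=
    norm_setIntegral_le_of_norm_le_const (measure_lt_top μ s) fun x _ => hgM x
  calc |∫ x in A, g x ∂μ - ∫ x in B, g x ∂μ|
      = |∫ x in A \ B, g x ∂μ - ∫ x in B \ A, g x ∂μ| := by rw [← hsplitA, ← hsplitB]; ring_nf
    _ ≤ |∫ x in A \ B, g x ∂μ| + |∫ x in B \ A, g x ∂μ| := abs_sub _ _
    _ ≤ M * μ.real (A \ B) + M * μ.real (B \ A) := add_le_add (hle _) (hle _)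
    _ = M * μ.real (A ∆ B) := by rw [measureReal_symmDiff_eq hA hB]; ring

theorem abs_integral_cond_sub_integral_cond_le (hg : Integrable g μ) (hgM : ∀ x, ‖g x‖ ≤ M)
    (hA : MeasurableSet A) (hB : MeasurableSet B) (hA0 : 0 < μ A) (hB0 : 0 < μ B) :
    |∫ x, g x ∂μ[|A] - ∫ x, g x ∂μ[|B]| ≤ 2 * (μ.real (A ∆ B) / μ.real A) * M := by
  rw [integral_cond_eq_inv_mul_setIntegral, integral_cond_eq_inv_mul_setIntegral]
  set a := μ.real A
  set b := μ.real B
  set s := μ.real (A ∆ B)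
  set JA := ∫ x in A, g x ∂μ
  set JB := ∫ x in B, g x ∂μ
  have ha : 0 < a := ENNReal.toReal_pos hA0.ne' (measure_ne_top μ A)
  have hb : 0 < b := ENNReal.toReal_pos hB0.ne' (measure_ne_top μ B)
  have hJB : |JB| ≤ M * b :=
    norm_setIntegral_le_of_norm_le_const (measure_lt_top μ B) fun x _ => hgM x
  have hJ : |JA - JB| ≤ M * s :=
    abs_setIntegral_sub_setIntegral_le_mul_measureReal_symmDiff hg hgM hA hB
  have hab : |b - a| ≤ s := by
    simpa only [symmDiff_comm B A] using
      abs_measureReal_sub_le_measureReal_symmDiff hB.nullMeasurableSet hA.nullMeasurableSet (μ := μ)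
  have hsplit : a⁻¹ * JA - b⁻¹ * JB = a⁻¹ * (JA - JB) + (b - a) / (a * b) * JB := by
    field_simp
    ring
  calc |a⁻¹ * JA - b⁻¹ * JB|
      ≤ |a⁻¹ * (JA - JB)| + |(b - a) / (a * b) * JB| := hsplit ▸ abs_add_le _ _
    _ = a⁻¹ * |JA - JB| + |b - a| / (a * b) * |JB| := by
        rw [abs_mul, abs_mul, abs_div, abs_of_pos (by positivity : 0 < a * b),
          abs_of_pos (inv_pos.mpr ha)]
    _ ≤ a⁻¹ * (M * s) + s / (a * b) * (M * b) := by gcongr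
    _ = 2 * (s / a) * M := by field_simp; ring

end ConditionalIntegrals

theorem tsum_div_two_pow_mul_add_one_le {t c : ℕ → ℝ} {δ : ℝ} (hδ : 0 ≤ δ)
    (hc : ∀ m, 0 ≤ c m) (ht : ∀ m, 0 ≤ t m) (htc : ∀ m, t m ≤ δ * c m) :
    ∑' m, t m / (2 ^ (m + 1) * (c m + 1)) ≤ δ := by
  have hterm (m : ℕ) : t m / (2 ^ (m + 1) * (c m + 1)) ≤ δ / 2 / 2 ^ m := by
    have hc1 : 0 < c m + 1 := by linarith [hc m]
    calc t m / (2 ^ (m + 1) * (c m + 1))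
        ≤ δ * (c m + 1) / (2 ^ (m + 1) * (c m + 1)) := by
          gcongr; nlinarith [htc m]
      _ = δ / 2 / 2 ^ m := by field_simp; ring
  have hnonneg (m : ℕ) : 0 ≤ t m / (2 ^ (m + 1) * (c m + 1)) :=
    div_nonneg (ht m) (by have := hc m; positivity)
  calc ∑' m, t m / (2 ^ (m + 1) * (c m + 1))
      ≤ ∑' m : ℕ, δ / 2 / 2 ^ m :=
        ((summable_geometric_two' δ).of_nonneg_of_le hnonneg hterm).tsum_le_tsum hterm
          (summable_geometric_two' δ)
    _ = δ := tsum_geometric_two' δ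

theorem conditional_measures_close_general {X : Type*} [MetricSpace X] [CompactSpace X]
    [MeasurableSpace X] [BorelSpace X]
    (f : ℕ → C(X, ℝ))
    (d : Measure X → Measure X → ℝ)
    (hd : ∀ μ ν : Measure X, d μ ν =
      ∑' m : ℕ, |(∫ x, f m x ∂μ) - ∫ x, f m x ∂ν| / (2 ^ (m + 1) * (‖f m‖ + 1)))
    (μ : Measure X) [IsProbabilityMeasure μ]
    (A B : Set X) (hA : MeasurableSet A) (hB : MeasurableSet B)
    (hApos : 0 < μ A) (hBpos : 0 < μ B)
    (ε : ℝ) (hε : 0 < ε) (hAB : μ (symmDiff A B) < μ A * ENNReal.ofReal ε) :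
    d (ProbabilityTheory.cond μ A) (ProbabilityTheory.cond μ B) ≤ 2 * ε := by
  have hratio : μ.real (A ∆ B) / μ.real A ≤ ε := by
    have hlt := ENNReal.toReal_strict_mono (by finiteness) hAB
    rw [ENNReal.toReal_mul, ENNReal.toReal_ofReal hε.le] at hlt
    exact (div_le_iff₀' (ENNReal.toReal_pos hApos.ne' (measure_ne_top μ A))).mpr hlt.le
  rw [hd]
  refine tsum_div_two_pow_mul_add_one_le (by positivity) (fun m => norm_nonneg _)
    (fun m => abs_nonneg _) fun m => ?_
  have hint : Integrable (f m) μ :=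
    (f m).continuous.integrable_of_hasCompactSupport (HasCompactSupport.of_compactSpace _)
  calc _ ≤ 2 * (μ.real (A ∆ B) / μ.real A) * ‖f m‖ :=
        abs_integral_cond_sub_integral_cond_le hint (f m).norm_coe_le_norm hA hB hApos hBpos
    _ ≤ 2 * ε * ‖f m‖ := by gcongr

theorem conditional_measures_close {X : Type*} [MetricSpace X] [CompactSpace X]
    [MeasurableSpace X] [BorelSpace X]
    (f : ℕ → C(X, ℝ)) (hf : DenseRange f)
    (d : Measure X → Measure X → ℝ)
    (hd : ∀ μ ν : Measure X, d μ ν =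
      ∑' m : ℕ, |(∫ x, f m x ∂μ) - ∫ x, f m x ∂ν| / (2 ^ (m + 1) * (‖f m‖ + 1)))
    (μ : Measure X) [IsProbabilityMeasure μ]
    (A B : Set X) (hA : MeasurableSet A) (hB : MeasurableSet B)
    (hApos : 0 < μ A) (hBpos : 0 < μ B)
    (ε : ℝ) (hε : 0 < ε) (hAB : μ (symmDiff A B) < μ A * ENNReal.ofReal ε) :
    d (ProbabilityTheory.cond μ A) (ProbabilityTheory.cond μ B) ≤ 2 * ε :=
  conditional_measures_close_general f d hd μ A B hA hB hApos hBpos ε hε hAB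

end Paper
end
end

section
/- For a topological dynamical system (X,T) with X a compact metric space and T continuous surjective, the following are equivalent: (1) (X,T) is periodic (there is m ∈ ℕ with Tᵐ = id); (2) the induced hyperspace system (K(X), T_K) is periodic; (3) (K(X), T_K) is pointwise periodic (every closed set C satisfies T_K^n C = C for some n ≥ 1). -/
open MeasureTheory Topology Set Function TopologicalSpace

noncomputable section

namespace Paper

lemma isPeriodicPoint_iff_mem_periodicPts {α : Type*} {T : α → α} {x : α} :
    IsPeriodicPoint T x ↔ x ∈ periodicPts T :=
  Iff.rfl

lemma IsPeriodicSystem.isPointwisePeriodic {α : Type*} {T : α → α} (h : IsPeriodicSystem T) :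
    IsPointwisePeriodic T := by
  obtain ⟨m, hm, hTm⟩ := h
  exact fun x => ⟨m, hm, by rw [hTm, id]⟩

lemma isPeriodicPt_of_mapsTo_of_minimalPeriod_unique {α : Type*} {f : α → α} {C : Set α}
    {n : ℕ} {y : α} (hy : y ∈ periodicPts f) (hyC : y ∈ C) (hC : MapsTo f^[n] C C)
    (huniq : ∀ z ∈ C, minimalPeriod f z = minimalPeriod f y → z = y) :
    IsPeriodicPt f n y :=
  huniq _ (hC hyC) (minimalPeriod_apply_iterate hy n)

lemma isPeriodicSystem_of_bddAbove_minimalPeriod {α : Type*} {T : α → α}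
    (hT : IsPointwisePeriodic T) (hB : BddAbove (range (minimalPeriod T))) :
    IsPeriodicSystem T := by
  obtain ⟨B, hB⟩ := hB
  refine ⟨B.factorial, B.factorial_pos, funext fun x => ?_⟩
  have hpos : 0 < minimalPeriod T x := minimalPeriod_pos_of_mem_periodicPts
    (isPeriodicPoint_iff_mem_periodicPts.mp (hT x))
  exact isPeriodicPt_iff_minimalPeriod_dvd.mpr (Nat.dvd_factorial hpos (hB ⟨x, rfl⟩))

lemma exists_tendsto_strictMono_comp_of_not_bddAbove {X : Type*} [TopologicalSpace X]
    [SeqCompactSpace X] {g : X → ℕ} (hg : ¬BddAbove (range g)) :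
    ∃ (a : X) (y : ℕ → X), StrictMono (g ∘ y) ∧ Filter.Tendsto y Filter.atTop (𝓝 a) := by
  have hlarge : ∀ n : ℕ, ∃ x, n < g x := by
    simpa [bddAbove_def] using hg
  choose f hf using hlarge
  obtain ⟨φ, -, hφ⟩ := Filter.strictMono_subseq_of_id_le fun n => (hf n).le
  obtain ⟨a, ψ, hψ, hlim⟩ := SeqCompactSpace.tendsto_subseq (f ∘ φ)
  exact ⟨a, f ∘ φ ∘ ψ, hφ.comp hψ, hlim⟩

section Hyperspace

variable {X : Type*} [TopologicalSpace X] {T : X → X} (hT : Continuous T)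

lemma coe_TK_iterate (n : ℕ) (C : NonemptyCompacts X) :
    (((TK T hT)^[n] C : NonemptyCompacts X) : Set X) = T^[n] '' (C : Set X) := by
  induction n with
  | zero => simp
  | succ n ih =>
    rw [iterate_succ_apply', iterate_succ', image_comp, ← ih]
    rfl

lemma IsPeriodicSystem.TK (h : IsPeriodicSystem T) : IsPeriodicSystem (TK T hT) := by
  obtain ⟨m, hm, hTm⟩ := h
  refine ⟨m, hm, funext fun C => NonemptyCompacts.ext ?_⟩
  rw [coe_TK_iterate, hTm, image_id, id]

variable {hT}

lemma IsPointwisePeriodic.exists_iterate_image_eq (h : IsPointwisePeriodic (TK T hT))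
    {C : Set X} (hC : IsCompact C) (hne : C.Nonempty) :
    ∃ n, 0 < n ∧ T^[n] '' C = C := by
  obtain ⟨n, hn, hfix⟩ := h ⟨⟨C, hC⟩, hne⟩
  exact ⟨n, hn, (hfix ▸ coe_TK_iterate hT n ⟨⟨C, hC⟩, hne⟩).symm⟩

lemma IsPointwisePeriodic.of_TK (h : IsPointwisePeriodic (TK T hT)) : IsPointwisePeriodic T := by
  intro x
  obtain ⟨n, hn, hfix⟩ := h.exists_iterate_image_eq isCompact_singleton (singleton_nonempty x)
  exact ⟨n, hn, by simpa [image_singleton] using hfix⟩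

/-- If the minimal periods were unbounded, a convergent sequence `y k → a` with strictly
increasing minimal periods would give a compact set `{a} ∪ {y k}` in which `y k`, for large `k`,
is the only point of its minimal period. A period `n` of this set is then a period of `y k`,
which is absurd once the minimal period of `y k` exceeds `n`. -/
lemma IsPointwisePeriodic.bddAbove_minimalPeriod [SeqCompactSpace X]
    (h : IsPointwisePeriodic (TK T hT)) : BddAbove (range (minimalPeriod T)) := by
  by_contra hunb
  obtain ⟨a, y, hy, hlim⟩ := exists_tendsto_strictMono_comp_of_not_bddAbove hunb
  obtain ⟨n, hn, hC⟩ := h.exists_iterate_image_eq hlim.isCompact_insert_range (insert_nonempty a _)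
  set k := minimalPeriod T a + n + 1
  have hk : k ≤ minimalPeriod T (y k) := hy.le_apply
  have hper : IsPeriodicPt T n (y k) := by
    refine isPeriodicPt_of_mapsTo_of_minimalPeriod_unique
      (isPeriodicPoint_iff_mem_periodicPts.mp (h.of_TK (y k)))
      (mem_insert_of_mem _ (mem_range_self k)) (hC ▸ mapsTo_image _ _) ?_
    rintro z (rfl | ⟨j, rfl⟩) hz
    · omega
    · rw [hy.injective hz]
  have hle := Nat.le_of_dvd hn hper.minimalPeriod_dvd
  omega

lemma IsPointwisePeriodic.isPeriodicSystem_of_TK [SeqCompactSpace X]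
    (h : IsPointwisePeriodic (TK T hT)) : IsPeriodicSystem T :=
  isPeriodicSystem_of_bddAbove_minimalPeriod h.of_TK h.bddAbove_minimalPeriod

end Hyperspace

theorem periodic_iff_hyperspace_periodic_general {X : Type*} [MetricSpace X] [CompactSpace X]
    (T : X → X) (hT : Continuous T) :
    (IsPeriodicSystem T ↔ IsPeriodicSystem (TK T hT)) ∧
    (IsPeriodicSystem (TK T hT) ↔ IsPointwisePeriodic (TK T hT)) :=
  ⟨⟨IsPeriodicSystem.TK hT, fun h => h.isPointwisePeriodic.isPeriodicSystem_of_TK⟩,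
    ⟨IsPeriodicSystem.isPointwisePeriodic, fun h => h.isPeriodicSystem_of_TK.TK hT⟩⟩

theorem periodic_iff_hyperspace_periodic {X : Type*} [MetricSpace X] [CompactSpace X]
    (T : X → X) (hT : Continuous T) (hTs : Surjective T) :
    (IsPeriodicSystem T ↔ IsPeriodicSystem (TK T hT)) ∧
    (IsPeriodicSystem (TK T hT) ↔ IsPointwisePeriodic (TK T hT)) :=
  periodic_iff_hyperspace_periodic_general T hT

end Paper
end
end

section
/- Let X = {0} ∪ {1/n : n ∈ ℕ} with subspace topology from ℝ, and let T : X → X fix 0 and 1, and for each n ∈ ℕ cyclically permute the block {1/2ⁿ, 1/(2ⁿ+1), ..., 1/(2^{n+1}−1)} by T(1/2ⁿ) = 1/(2ⁿ+1), ..., T(1/(2^{n+1}−1)) = 1/2ⁿ. Then (X,T) is pointwise periodic, but the closed set K = {0} ∪ {1/2ⁿ : n ∈ ℤ₊} is not a periodic point of the induced map T_K on the hyperspace K(X). -/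
/-!
Each block `{1/2ⁿ, …, 1/(2ⁿ⁺¹ - 1)}` is a cycle of length `2ⁿ`, so every point is periodic.
If `T_K^m K = K` with `m ≥ 1`, then `Tᵐ(1/2ᵐ) = 1/(2ᵐ + m)` would lie in `K`; but
`2ᵐ < 2ᵐ + m < 2ᵐ⁺¹`, so it is not of the form `1/2ᵖ`.
-/

open MeasureTheory Topology Set Function TopologicalSpace

noncomputable section

namespace Paper

theorem coe_iterate_TK {α : Type*} [TopologicalSpace α] {T : α → α} (hT : Continuous T)
    (C : NonemptyCompacts α) (i : ℕ) :
    (((TK T hT)^[i] C : NonemptyCompacts α) : Set α) = T^[i] '' C := by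
  induction i with
  | zero => simp
  | succ i ih =>
    rw [iterate_succ_apply', iterate_succ', image_comp, ← ih]
    rfl

theorem isPeriodicPoint_TK_iff {α : Type*} [TopologicalSpace α] {T : α → α}
    (hT : Continuous T) (C : NonemptyCompacts α) :
    IsPeriodicPoint (TK T hT) C ↔ ∃ m, 0 < m ∧ T^[m] '' C = C := by
  simp only [IsPeriodicPoint, ← coe_iterate_TK hT, SetLike.coe_set_eq]

theorem iterate_eq_of_step {α β : Type*} {T : α → α} (v : α → β) (φ : ℕ → β) {a b : ℕ}
    (hstep : ∀ k, a ≤ k → k < b → ∀ x, v x = φ k → v (T x) = φ (k + 1))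
    {x : α} (hx : v x = φ a) {c : ℕ} (hac : a ≤ c) (hcb : c ≤ b) :
    v (T^[c - a] x) = φ c := by
  obtain ⟨i, rfl⟩ := Nat.exists_eq_add_of_le hac
  rw [Nat.add_sub_cancel_left]
  induction i with
  | zero => exact hx
  | succ i ih =>
    rw [iterate_succ_apply']
    exact hstep (a + i) (by omega) (by omega) _ (ih (by omega) (by omega))

theorem two_pow_add_ne_two_pow {m : ℕ} (hm : 0 < m) (p : ℕ) : 2 ^ m + m ≠ 2 ^ p := by
  intro h
  have hlt : 2 ^ m < 2 ^ p := by omega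
  have hgt : 2 ^ p < 2 ^ (m + 1) := by rw [pow_succ]; have := m.lt_two_pow_self; omega
  rw [Nat.pow_lt_pow_iff_right one_lt_two] at hlt hgt
  omega

section Blocks

variable {S : Set ℝ} {T : S → S}

theorem coe_iterate_of_mem_block
    (hTmid : ∀ n k : ℕ, 0 < n → 2 ^ n ≤ k → k < 2 ^ (n + 1) - 1 →
      ∀ x : S, (x : ℝ) = 1 / (k : ℝ) → (T x : ℝ) = 1 / ((k : ℝ) + 1))
    {n k c : ℕ} (hn : 0 < n) (hk : 2 ^ n ≤ k) (hkc : k ≤ c) (hc : c ≤ 2 ^ (n + 1) - 1)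
    {x : S} (hx : (x : ℝ) = 1 / k) :
    (T^[c - k] x : ℝ) = 1 / c :=
  iterate_eq_of_step (fun y : S ↦ (y : ℝ)) (fun j : ℕ ↦ 1 / (j : ℝ))
    (fun j hkj hj y hy ↦ by push_cast; exact hTmid n j hn (hk.trans hkj) hj y hy) hx hkc hc

theorem iterate_two_pow_eq_self_of_mem_block
    (hTmid : ∀ n k : ℕ, 0 < n → 2 ^ n ≤ k → k < 2 ^ (n + 1) - 1 →
      ∀ x : S, (x : ℝ) = 1 / (k : ℝ) → (T x : ℝ) = 1 / ((k : ℝ) + 1))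
    (hTend : ∀ n : ℕ, 0 < n → ∀ x : S, (x : ℝ) = 1 / ((2 : ℝ) ^ (n + 1) - 1) →
      (T x : ℝ) = 1 / (2 : ℝ) ^ n)
    {n k : ℕ} (hn : 0 < n) (hk₁ : 2 ^ n ≤ k) (hk₂ : k < 2 ^ (n + 1))
    {x : S} (hx : (x : ℝ) = 1 / k) :
    T^[2 ^ n] x = x := by
  have hpow : 2 ^ (n + 1) = 2 * 2 ^ n := by rw [pow_succ']
  set last := 2 ^ (n + 1) - 1
  have h_last : (T^[last - k] x : ℝ) = 1 / last :=
    coe_iterate_of_mem_block hTmid hn hk₁ (by omega) le_rfl hx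
  have h_first : (T (T^[last - k] x) : ℝ) = 1 / ((2 ^ n : ℕ) : ℝ) := by
    push_cast
    exact hTend n hn _ (by rw [h_last]; push_cast [last, Nat.one_le_two_pow]; rfl)
  have h_back : (T^[k - 2 ^ n] (T (T^[last - k] x)) : ℝ) = 1 / k :=
    coe_iterate_of_mem_block hTmid hn le_rfl hk₁ (by omega) h_first
  have h_split : T^[2 ^ n] x = T^[k - 2 ^ n] (T (T^[last - k] x)) := by
    rw [← iterate_succ_apply' T, ← iterate_add_apply]
    congr 1
    omega
  exact Subtype.ext (by rw [h_split, h_back, hx])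

theorem isPointwisePeriodic_of_blocks
    (hS : S ⊆ {0} ∪ {x : ℝ | ∃ n : ℕ, 0 < n ∧ x = 1 / (n : ℝ)})
    (hT0 : ∀ x : S, (x : ℝ) = 0 → T x = x)
    (hT1 : ∀ x : S, (x : ℝ) = 1 → T x = x)
    (hTmid : ∀ n k : ℕ, 0 < n → 2 ^ n ≤ k → k < 2 ^ (n + 1) - 1 →
      ∀ x : S, (x : ℝ) = 1 / (k : ℝ) → (T x : ℝ) = 1 / ((k : ℝ) + 1))
    (hTend : ∀ n : ℕ, 0 < n → ∀ x : S, (x : ℝ) = 1 / ((2 : ℝ) ^ (n + 1) - 1) →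
      (T x : ℝ) = 1 / (2 : ℝ) ^ n) :
    IsPointwisePeriodic T := by
  intro x
  rcases hS x.2 with hx | ⟨k, hk, hx⟩
  · exact ⟨1, one_pos, hT0 x hx⟩
  obtain rfl | hk₁ := (Nat.one_le_iff_ne_zero.mpr hk.ne').eq_or_lt
  · exact ⟨1, one_pos, hT1 x (by simpa using hx)⟩
  exact ⟨2 ^ Nat.log 2 k, by positivity,
    iterate_two_pow_eq_self_of_mem_block hTmid hTend (Nat.log_pos one_lt_two hk₁)
      (Nat.pow_log_le_self 2 hk.ne') (Nat.lt_pow_succ_log_self one_lt_two k) hx⟩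

theorem not_isPeriodicPoint_TK_dyadic (hS : ∀ m : ℕ, 1 / (2 : ℝ) ^ m ∈ S)
    (hTc : Continuous T)
    (hTmid : ∀ n k : ℕ, 0 < n → 2 ^ n ≤ k → k < 2 ^ (n + 1) - 1 →
      ∀ x : S, (x : ℝ) = 1 / (k : ℝ) → (T x : ℝ) = 1 / ((k : ℝ) + 1))
    (K : NonemptyCompacts S)
    (hK : (K : Set S) = {x : S | (x : ℝ) = 0 ∨ ∃ n : ℕ, (x : ℝ) = 1 / (2 : ℝ) ^ n}) :
    ¬ IsPeriodicPoint (TK T hTc) K := by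
  rw [isPeriodicPoint_TK_iff]
  rintro ⟨m, hm, hKm⟩
  let y : S := ⟨1 / 2 ^ m, hS m⟩
  have hyK : y ∈ (K : Set S) := by rw [hK]; exact Or.inr ⟨m, rfl⟩
  have hy : (T^[m] y : ℝ) = 1 / ((2 ^ m + m : ℕ) : ℝ) := by
    have := coe_iterate_of_mem_block hTmid hm le_rfl (Nat.le_add_right _ m)
      (by rw [pow_succ]; have := m.lt_two_pow_self; omega) (x := y) (by push_cast; rfl)
    rwa [Nat.add_sub_cancel_left] at this
  have hTyK : T^[m] y ∈ (K : Set S) := hKm ▸ mem_image_of_mem _ hyK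
  rw [hK, mem_ofPred_eq, hy] at hTyK
  rcases hTyK with h0 | ⟨p, hp⟩
  · exact absurd h0 (by positivity)
  · rw [one_div, one_div, inv_inj] at hp
    exact two_pow_add_ne_two_pow hm p (by exact_mod_cast hp)

end Blocks

theorem pointwise_periodic_not_hyperspace_periodic
    (X5 : Set ℝ) (hX5 : X5 = {0} ∪ {x : ℝ | ∃ n : ℕ, 0 < n ∧ x = 1 / (n : ℝ)})
    (T : X5 → X5) (hTc : Continuous T)
    (hT0 : ∀ x : X5, (x : ℝ) = 0 → T x = x)
    (hT1 : ∀ x : X5, (x : ℝ) = 1 → T x = x)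
    (hTmid : ∀ n k : ℕ, 0 < n → 2 ^ n ≤ k → k < 2 ^ (n + 1) - 1 →
      ∀ x : X5, (x : ℝ) = 1 / (k : ℝ) → (T x : ℝ) = 1 / ((k : ℝ) + 1))
    (hTend : ∀ n : ℕ, 0 < n → ∀ x : X5, (x : ℝ) = 1 / ((2 : ℝ) ^ (n + 1) - 1) →
      (T x : ℝ) = 1 / (2 : ℝ) ^ n)
    (K : NonemptyCompacts X5)
    (hK : (K : Set X5) = {x : X5 | (x : ℝ) = 0 ∨ ∃ n : ℕ, (x : ℝ) = 1 / (2 : ℝ) ^ n}) :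
    IsPointwisePeriodic T ∧ ¬ IsPeriodicPoint (TK T hTc) K := by
  have hdyadic : ∀ m : ℕ, 1 / (2 : ℝ) ^ m ∈ X5 := fun m ↦
    hX5 ▸ Or.inr ⟨2 ^ m, by positivity, by push_cast; rfl⟩
  exact ⟨isPointwisePeriodic_of_blocks hX5.subset hT0 hT1 hTmid hTend,
    not_isPeriodicPoint_TK_dyadic hdyadic hTc hTmid K hK⟩

end Paper
end
end

section
/- If (X,T) is a weakly mixing M-system, then (K(X), T_K) is an M-system. -/
open MeasureTheory Topology Set Function TopologicalSpace

noncomputable section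

namespace Paper

/-! Finite sets are dense in `K(X)`, and a finite set indexed by `ι` is the image of a point of
`X^ι` under the equivariant map `x ↦ range x`. Weak mixing makes every finite product `X^ι`
transitive (Furstenberg's intersection lemma), and transitivity passes to `K(X)` through these
maps. For minimal points: given nonempty open `Uᵢ`, transitivity yields a nonempty open `V` and
times `kᵢ` with `T^[kᵢ] V ⊆ Uᵢ`; a minimal point `z ∈ V` is carried by the equivariant map
`x ↦ {T^[kᵢ] x}` to a minimal point of `T_K` close to any prescribed compact set. -/

section Dynamics

variable {α β ι : Type*} [TopologicalSpace α] [TopologicalSpace β] {T : α → α} {S : β → β}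

def hittingTimes (T : α → α) (U V : Set α) : Set ℕ :=
  {n | (U ∩ T^[n] ⁻¹' V).Nonempty}

theorem mapsTo_orbitClosure (hT : Continuous T) (x : α) :
    MapsTo T (orbitClosure T x) (orbitClosure T x) := by
  refine MapsTo.closure ?_ hT
  rintro _ ⟨n, rfl⟩
  exact ⟨n + 1, iterate_succ_apply' T n x⟩

theorem image_orbitClosure [CompactSpace α] [T2Space β] {π : α → β} (hπ : Continuous π)
    (h : Semiconj π T S) (x : α) : π '' orbitClosure T x = orbitClosure S (π x) := by
  have hrange : π '' range (fun n : ℕ => T^[n] x) = range fun n : ℕ => S^[n] (π x) := by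
    rw [← range_comp]
    exact congrArg range (funext fun n => (h.iterate_right n).eq x)
  rw [orbitClosure, orbitClosure, ← hrange]
  exact image_closure_of_isCompact isClosed_closure.isCompact hπ.continuousOn

theorem IsMinimalPoint.map [CompactSpace α] [T2Space β] (hT : Continuous T) {π : α → β}
    (hπ : Continuous π) (h : Semiconj π T S) {x : α} (hx : IsMinimalPoint T x) :
    IsMinimalPoint S (π x) := by
  intro Y ⟨y, hy⟩ hY hSY hYsub
  rw [← image_orbitClosure hπ h] at hYsub ⊢
  refine hYsub.antisymm ?_
  have hfiber : orbitClosure T x ∩ π ⁻¹' Y = orbitClosure T x := by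
    obtain ⟨c, hc, rfl⟩ := hYsub hy
    refine hx _ ⟨c, hc, hy⟩ (isClosed_closure.inter (hY.preimage hπ)) ?_ inter_subset_left
    refine fun z hz => ⟨mapsTo_orbitClosure hT x hz.1, ?_⟩
    rw [mem_preimage, h.eq]
    exact hSY hz.2
  rintro _ ⟨c, hc, rfl⟩
  rw [← hfiber] at hc
  exact hc.2

theorem IsTransitive.infinite_hittingTimes_of_semiconj (hS : IsTransitive S) {π : β → α}
    (hπ : Continuous π) (h : Semiconj π S T) {O O' : Set α} (hO : IsOpen O) (hO' : IsOpen O')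
    (hOπ : (O ∩ range π).Nonempty) (hO'π : (O' ∩ range π).Nonempty) :
    (hittingTimes T O O').Infinite := by
  obtain ⟨_, hb, b, rfl⟩ := hOπ
  obtain ⟨_, hb', b', rfl⟩ := hO'π
  refine (hS _ _ (hO.preimage hπ) ⟨b, hb⟩ (hO'.preimage hπ) ⟨b', hb'⟩).mono ?_
  rintro n ⟨y, hyO, hyO'⟩
  refine ⟨π y, hyO, ?_⟩
  rw [mem_preimage, ← (h.iterate_right n).eq]
  exact hyO'

theorem IsWeaklyMixing.isTransitive (hwm : IsWeaklyMixing T) : IsTransitive T := by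
  intro U V hU hUne hV hVne
  refine (hwm _ _ (hU.prod hU) (hUne.prod hUne) (hV.prod hV) (hVne.prod hVne)).mono ?_
  rintro n ⟨⟨a, b⟩, ⟨haU, -⟩, hab⟩
  rw [mem_preimage, Prod.map_iterate] at hab
  exact ⟨a, haU, hab.1⟩

/-- Witnesses: `W = U₁ ∩ T^{-j} U₂` and `W' = V₁ ∩ T^{-j} V₂` for any `j ∈ N(U₁ × V₁, U₂ × V₂)`. -/
theorem IsWeaklyMixing.exists_hittingTimes_subset_inter (hT : Continuous T)
    (hwm : IsWeaklyMixing T) {U₁ V₁ U₂ V₂ : Set α} (hU₁ : IsOpen U₁) (hU₁ne : U₁.Nonempty)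
    (hV₁ : IsOpen V₁) (hV₁ne : V₁.Nonempty) (hU₂ : IsOpen U₂) (hU₂ne : U₂.Nonempty)
    (hV₂ : IsOpen V₂) (hV₂ne : V₂.Nonempty) :
    ∃ W W' : Set α, IsOpen W ∧ W.Nonempty ∧ IsOpen W' ∧ W'.Nonempty ∧
      hittingTimes T W W' ⊆ hittingTimes T U₁ V₁ ∩ hittingTimes T U₂ V₂ := by
  obtain ⟨j, ⟨a, b⟩, ⟨haU₁, hbV₁⟩, hab⟩ :=
    (hwm _ _ (hU₁.prod hV₁) (hU₁ne.prod hV₁ne) (hU₂.prod hV₂) (hU₂ne.prod hV₂ne)).nonempty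
  rw [mem_preimage, Prod.map_iterate] at hab
  refine ⟨U₁ ∩ T^[j] ⁻¹' U₂, V₁ ∩ T^[j] ⁻¹' V₂, hU₁.inter (hU₂.preimage (hT.iterate j)),
    ⟨a, haU₁, hab.1⟩, hV₁.inter (hV₂.preimage (hT.iterate j)), ⟨b, hbV₁, hab.2⟩, ?_⟩
  rintro n ⟨x, ⟨hxU₁, hxU₂⟩, hxV₁, hxV₂⟩
  refine ⟨⟨x, hxU₁, hxV₁⟩, T^[j] x, hxU₂, ?_⟩
  rwa [mem_preimage, ← iterate_add_apply, add_comm, iterate_add_apply]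

theorem IsWeaklyMixing.exists_hittingTimes_subset_biInter [Nonempty α] (hT : Continuous T)
    (hwm : IsWeaklyMixing T) (s : Finset ι) {U V : ι → Set α} (hU : ∀ i, IsOpen (U i))
    (hUne : ∀ i, (U i).Nonempty) (hV : ∀ i, IsOpen (V i)) (hVne : ∀ i, (V i).Nonempty) :
    ∃ W W' : Set α, IsOpen W ∧ W.Nonempty ∧ IsOpen W' ∧ W'.Nonempty ∧
      hittingTimes T W W' ⊆ ⋂ i ∈ s, hittingTimes T (U i) (V i) := by
  classical
  induction s using Finset.induction_on with
  | empty =>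
    exact ⟨univ, univ, isOpen_univ, univ_nonempty, isOpen_univ, univ_nonempty, by simp⟩
  | insert a s _ ih =>
    obtain ⟨W, W', hW, hWne, hW', hW'ne, hsub⟩ := ih
    obtain ⟨Z, Z', hZ, hZne, hZ', hZ'ne, hZsub⟩ := hwm.exists_hittingTimes_subset_inter hT
      (hU a) (hUne a) (hV a) (hVne a) hW hWne hW' hW'ne
    refine ⟨Z, Z', hZ, hZne, hZ', hZ'ne, fun n hn => ?_⟩
    rw [Finset.set_biInter_insert]
    exact ⟨(hZsub hn).1, hsub (hZsub hn).2⟩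

theorem IsWeaklyMixing.isTransitive_piMap [Nonempty α] [Finite ι] (hT : Continuous T)
    (hwm : IsWeaklyMixing T) : IsTransitive (Pi.map fun _ : ι => T) := by
  have := Fintype.ofFinite ι
  intro U V hU ⟨u, hu⟩ hV ⟨v, hv⟩
  obtain ⟨U', hU', hU'sub⟩ := isOpen_pi_iff'.1 hU u hu
  obtain ⟨V', hV', hV'sub⟩ := isOpen_pi_iff'.1 hV v hv
  obtain ⟨W, W', hW, hWne, hW', hW'ne, hsub⟩ := hwm.exists_hittingTimes_subset_biInter hT
    Finset.univ (fun i => (hU' i).1) (fun i => ⟨u i, (hU' i).2⟩) (fun i => (hV' i).1)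
    (fun i => ⟨v i, (hV' i).2⟩)
  refine (hwm.isTransitive W W' hW hWne hW' hW'ne).mono fun n hn => ?_
  choose x hxU hxV using fun i => mem_iInter₂.1 (hsub hn) i (Finset.mem_univ i)
  refine ⟨x, hU'sub fun i _ => hxU i, hV'sub fun i _ => ?_⟩
  rw [Pi.map_iterate]
  exact hxV i

theorem IsTransitive.exists_isOpen_mapsTo_iterate [Nonempty α] (hT : Continuous T)
    (htr : IsTransitive T) (s : Finset ι) {U : ι → Set α} (hU : ∀ i, IsOpen (U i))
    (hUne : ∀ i, (U i).Nonempty) :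
    ∃ V : Set α, IsOpen V ∧ V.Nonempty ∧ ∃ k : ι → ℕ, ∀ i ∈ s, MapsTo T^[k i] V (U i) := by
  classical
  induction s using Finset.induction_on with
  | empty => exact ⟨univ, isOpen_univ, univ_nonempty, 0, by simp⟩
  | insert a s _ ih =>
    obtain ⟨V, hV, hVne, k, hk⟩ := ih
    obtain ⟨m, hm⟩ := (htr _ _ (hU a) (hUne a) hV hVne).nonempty
    refine ⟨U a ∩ T^[m] ⁻¹' V, (hU a).inter (hV.preimage (hT.iterate m)), hm,
      update (fun i => k i + m) a 0, ?_⟩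
    intro i hi x ⟨hxU, hxV⟩
    obtain rfl | hia := eq_or_ne i a
    · simpa using hxU
    · rw [update_of_ne hia, iterate_add_apply]
      exact hk i ((Finset.mem_insert.1 hi).resolve_left hia) hxV

end Dynamics

section Hyperspace

variable {X ι : Type*}

def rangeNonemptyCompacts [TopologicalSpace X] [Finite ι] [Nonempty ι] (p : ι → X) :
    NonemptyCompacts X :=
  ⟨⟨range p, (finite_range p).isCompact⟩, range_nonempty p⟩

@[simp]
theorem coe_rangeNonemptyCompacts [TopologicalSpace X] [Finite ι] [Nonempty ι] (p : ι → X) :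
    (rangeNonemptyCompacts p : Set X) = range p :=
  rfl

theorem rangeNonemptyCompacts_comp_of_surjective [TopologicalSpace X] {ι' : Type*} [Finite ι]
    [Nonempty ι] [Finite ι'] [Nonempty ι'] {σ : ι' → ι} (hσ : Surjective σ) (p : ι → X) :
    rangeNonemptyCompacts (p ∘ σ) = rangeNonemptyCompacts p :=
  NonemptyCompacts.ext (hσ.range_comp p)

theorem semiconj_rangeNonemptyCompacts [TopologicalSpace X] [Finite ι] [Nonempty ι] {T : X → X}
    (hT : Continuous T) :
    Semiconj (rangeNonemptyCompacts (ι := ι)) (Pi.map fun _ => T) (TK T hT) :=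
  fun p => NonemptyCompacts.ext (range_comp T p)

theorem lipschitzWith_one_rangeNonemptyCompacts [MetricSpace X] [Fintype ι] [Nonempty ι] :
    LipschitzWith 1 (rangeNonemptyCompacts (X := X) (ι := ι)) := by
  refine LipschitzWith.of_dist_le_mul fun p q => ?_
  rw [NNReal.coe_one, one_mul, Metric.NonemptyCompacts.dist_eq]
  refine Metric.hausdorffDist_le_of_mem_dist dist_nonneg ?_ ?_
  · rintro _ ⟨i, rfl⟩
    exact ⟨q i, mem_range_self i, dist_le_pi_dist p q i⟩
  · rintro _ ⟨i, rfl⟩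
    exact ⟨p i, mem_range_self i, dist_comm (q i) (p i) ▸ dist_le_pi_dist p q i⟩

theorem exists_rangeNonemptyCompacts_mem [MetricSpace X] {O : Set (NonemptyCompacts X)}
    (hO : IsOpen O) (hOne : O.Nonempty) :
    ∃ (n : ℕ) (p : Fin (n + 1) → X), rangeNonemptyCompacts p ∈ O := by
  obtain ⟨K, hK⟩ := hOne
  obtain ⟨ε, hε, hball⟩ := Metric.isOpen_iff.1 hO K hK
  obtain ⟨t, htK, ht, hcover⟩ := finite_cover_balls_of_compact K.isCompact (half_pos hε)
  obtain ⟨n, p, -, rfl⟩ := ht.fin_param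
  obtain _ | n := n
  · obtain ⟨x, hx⟩ := K.nonempty
    simpa using hcover hx
  refine ⟨n, p, hball ?_⟩
  rw [Metric.mem_ball, Metric.NonemptyCompacts.dist_eq, coe_rangeNonemptyCompacts]
  refine (Metric.hausdorffDist_le_of_mem_dist (half_pos hε).le ?_ ?_).trans_lt (half_lt_self hε)
  · exact fun x hx => ⟨x, htK hx, by simpa using (half_pos hε).le⟩
  · intro x hx
    obtain ⟨y, hy, hxy⟩ := mem_iUnion₂.1 (hcover hx)
    exact ⟨y, hy, (Metric.mem_ball.1 hxy).le⟩

theorem IsWeaklyMixing.isTransitive_TK [MetricSpace X] {T : X → X} (hT : Continuous T)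
    (hwm : IsWeaklyMixing T) : IsTransitive (TK T hT) := by
  intro O O' hO hOne hO' hO'ne
  have : Nonempty X := hOne.elim fun K _ => K.nonempty.to_type
  obtain ⟨n, p, hp⟩ := exists_rangeNonemptyCompacts_mem hO hOne
  obtain ⟨m, p', hp'⟩ := exists_rangeNonemptyCompacts_mem hO' hO'ne
  have hprod : IsTransitive (Pi.map fun _ : Fin (n + 1) × Fin (m + 1) => T) :=
    hwm.isTransitive_piMap hT
  refine hprod.infinite_hittingTimes_of_semiconj
    lipschitzWith_one_rangeNonemptyCompacts.continuous (semiconj_rangeNonemptyCompacts hT) hO hO'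
    ⟨_, hp, p ∘ Prod.fst, rangeNonemptyCompacts_comp_of_surjective Prod.fst_surjective p⟩
    ⟨_, hp', p' ∘ Prod.snd, rangeNonemptyCompacts_comp_of_surjective Prod.snd_surjective p'⟩

theorem IsMSystem.dense_isMinimalPoint_TK [MetricSpace X] [CompactSpace X] {T : X → X}
    (hT : Continuous T) (hM : IsMSystem T) : Dense {K | IsMinimalPoint (TK T hT) K} := by
  refine dense_iff_inter_open.2 fun O hO hOne => ?_
  have : Nonempty X := hOne.elim fun K _ => K.nonempty.to_type
  obtain ⟨n, p, hp⟩ := exists_rangeNonemptyCompacts_mem hO hOne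
  obtain ⟨U, hU, hUsub⟩ := isOpen_pi_iff'.1
    (hO.preimage lipschitzWith_one_rangeNonemptyCompacts.continuous) p hp
  obtain ⟨V, hV, hVne, k, hk⟩ := hM.1.exists_isOpen_mapsTo_iterate hT Finset.univ
    (fun i => (hU i).1) (fun i => ⟨p i, (hU i).2⟩)
  obtain ⟨z, hzV, hz⟩ := dense_iff_inter_open.1 hM.2 V hV hVne
  let φ : X → Fin (n + 1) → X := fun x i => T^[k i] x
  have hφ : Semiconj φ T (Pi.map fun _ => T) :=
    fun x => funext fun i => ((Commute.self_iterate T (k i)).eq x).symm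
  refine ⟨rangeNonemptyCompacts (φ z), hUsub fun i _ => hk i (Finset.mem_univ i) hzV, ?_⟩
  exact hz.map (π := rangeNonemptyCompacts ∘ φ) hT
    (lipschitzWith_one_rangeNonemptyCompacts.continuous.comp
      (continuous_pi fun i => hT.iterate (k i)))
    ((semiconj_rangeNonemptyCompacts hT).comp_left hφ)

end Hyperspace

theorem wm_Msystem_implies_hyperspace_Msystem_general {X : Type*} [MetricSpace X] [CompactSpace X]
    (T : X → X) (hT : Continuous T)
    (hwm : IsWeaklyMixing T) (hM : IsMSystem T) :
    IsMSystem (TK T hT) :=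
  ⟨hwm.isTransitive_TK hT, hM.dense_isMinimalPoint_TK hT⟩

theorem wm_Msystem_implies_hyperspace_Msystem {X : Type*} [MetricSpace X] [CompactSpace X]
    (T : X → X) (hT : Continuous T) (hTs : Surjective T)
    (hwm : IsWeaklyMixing T) (hM : IsMSystem T) :
    IsMSystem (TK T hT) :=
  wm_Msystem_implies_hyperspace_Msystem_general T hT hwm hM

end Paper
end
end

section
/- For a topological dynamical system (X,T) the following are equivalent: (1) (X,T) is periodic; (2) (M(X), T_M) is periodic; (3) (M(X), T_M) is pointwise periodic. -/
/-!
Pushforward commutes with iteration, so every period of `T` is a period of `T_M`. Conversely, if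
`T_M` is pointwise periodic then so is `T`, by looking at Dirac masses. Were the minimal periods
of `T` unbounded, choose points `z n` with pairwise distinct minimal periods and a probability
measure `ν` giving positive mass to each of them. If `T_M^m ν = ν`, invariance forces some `z k`
to be mapped to `z n` by `T^m`; as `T^m` preserves minimal periods, `k = n`. So every `z n` has
minimal period dividing `m`, impossible for infinitely many distinct periods.
-/

open MeasureTheory Topology Set Function TopologicalSpace

noncomputable section

namespace Paper

section Periodicity

variable {α : Type*} {f : α → α}

theorem IsPeriodicSystem.isPointwisePeriodic_s13 (h : IsPeriodicSystem f) : IsPointwisePeriodic f :=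
  let ⟨m, hm, hid⟩ := h
  fun x => ⟨m, hm, congrFun hid x⟩

theorem isPeriodicSystem_of_finite_range_minimalPeriod (hper : ∀ x, x ∈ periodicPts f)
    (hfin : (range (minimalPeriod f)).Finite) : IsPeriodicSystem f := by
  refine ⟨hfin.toFinset.lcm id, Nat.pos_of_ne_zero fun hzero => ?_, funext fun x => ?_⟩
  · obtain ⟨_, hq, hq0⟩ := Finset.lcm_eq_zero_iff.mp hzero
    obtain ⟨x, rfl⟩ := hfin.mem_toFinset.mp hq
    exact (minimalPeriod_pos_of_mem_periodicPts (hper x)).ne' hq0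
  · exact isPeriodicPt_iff_minimalPeriod_dvd.mpr
      (Finset.dvd_lcm (hfin.mem_toFinset.mpr (mem_range_self x)))

theorem exists_injective_minimalPeriod_comp (hinf : (range (minimalPeriod f)).Infinite) :
    ∃ z : ℕ → α, Injective (minimalPeriod f ∘ z) := by
  let e := hinf.natEmbedding
  choose z hz using fun n => (e n).2
  exact ⟨z, fun a b hab => e.injective (Subtype.ext (by simpa [hz] using hab))⟩

-- `f^[m]` preserves minimal periods.
theorem isPeriodicPt_of_forall_exists_iterate_eq {ι : Type*} {z : ι → α}
    (hz : ∀ i, z i ∈ periodicPts f) (hinj : Injective (minimalPeriod f ∘ z)) {m : ℕ}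
    (h : ∀ i, ∃ j, f^[m] (z j) = z i) (i : ι) : IsPeriodicPt f m (z i) := by
  obtain ⟨j, hj⟩ := h i
  obtain rfl : j = i := hinj <| by
    simpa [hj] using (minimalPeriod_apply_iterate (hz j) m).symm
  exact hj

end Periodicity

open ProbabilityTheory in
theorem exists_isProbabilityMeasure_forall_singleton_ne_zero :
    ∃ μ : Measure ℕ, IsProbabilityMeasure μ ∧ ∀ n, μ {n} ≠ 0 := by
  let p : unitInterval := ⟨2⁻¹, by norm_num, by norm_num⟩
  have hp0 : p ≠ 0 := Subtype.coe_ne_coe.mp (by norm_num)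
  have hp1 : p ≠ 1 := Subtype.coe_ne_coe.mp (by norm_num)
  refine ⟨geometricMeasure p, inferInstance, fun n => ?_⟩
  rw [geometricMeasure_singleton hp0]
  exact (ENNReal.ofReal_pos.mpr (geometricMeasure_pos hp0 hp1 n)).ne'

-- The invariant measure `μ.map z` charges `{z i}`, hence also `f ⁻¹' {z i}`.
theorem exists_apply_eq_of_map_map_eq {Ω ι : Type*} [MeasurableSpace Ω]
    [MeasurableSingletonClass Ω] [MeasurableSpace ι] [DiscreteMeasurableSpace ι]
    {f : Ω → Ω} (hf : Measurable f) {μ : Measure ι} (hμ : ∀ i, μ {i} ≠ 0) {z : ι → Ω}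
    (h : (μ.map z).map f = μ.map z) (i : ι) : ∃ j, f (z j) = z i := by
  by_contra! hne
  have hz : Measurable z := .of_discrete
  have hnull : (μ.map z).map f {z i} = 0 := by
    rw [Measure.map_map hf hz, Measure.map_apply (hf.comp hz) (measurableSet_singleton _)]
    simp [preimage, hne]
  rw [h, Measure.map_apply hz (measurableSet_singleton _)] at hnull
  exact hμ i <| measure_mono_null (show {i} ⊆ z ⁻¹' {z i} from singleton_subset_iff.mpr rfl) hnull

section InducedMap

variable {X : Type*} [TopologicalSpace X] [MeasurableSpace X] [BorelSpace X] {T : X → X}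
  (hT : Continuous T)

theorem toMeasure_TM_iterate (n : ℕ) (μ : ProbabilityMeasure X) :
    ((TM T hT)^[n] μ : Measure X) = (μ : Measure X).map T^[n] := by
  induction n with
  | zero => simp
  | succ n ih =>
    rw [iterate_succ_apply', TM, ProbabilityMeasure.toMeasure_map, ih,
      Measure.map_map hT.measurable (hT.measurable.iterate n), ← iterate_succ']

theorem IsPeriodicSystem.TM (h : IsPeriodicSystem T) : IsPeriodicSystem (TM T hT) := by
  obtain ⟨m, hm, hid⟩ := h
  refine ⟨m, hm, funext fun μ => ProbabilityMeasure.toMeasure_injective ?_⟩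
  rw [toMeasure_TM_iterate, hid, Measure.map_id, id]

theorem semiconj_diracProba_TM : Semiconj diracProba T (TM T hT) := fun x =>
  ProbabilityMeasure.toMeasure_injective (Measure.map_dirac' hT.measurable x).symm

theorem mem_periodicPts_of_isPeriodicPoint_TM_diracProba [T1Space X] {x : X}
    (h : IsPeriodicPoint (TM T hT) (diracProba x)) : x ∈ periodicPts T := by
  obtain ⟨n, hn, hfix⟩ := h
  rw [← (semiconj_diracProba_TM hT).iterate_right n x] at hfix
  exact ⟨n, hn, injective_diracProba hfix⟩

theorem isPeriodicSystem_of_isPointwisePeriodic_TM [T1Space X]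
    (h : IsPointwisePeriodic (TM T hT)) : IsPeriodicSystem T := by
  have hper : ∀ x, x ∈ periodicPts T :=
    fun x => mem_periodicPts_of_isPeriodicPoint_TM_diracProba hT (h (diracProba x))
  refine isPeriodicSystem_of_finite_range_minimalPeriod hper (Set.not_infinite.mp fun hinf => ?_)
  obtain ⟨z, hinj⟩ := exists_injective_minimalPeriod_comp hinf
  obtain ⟨μ, _, hμ⟩ := exists_isProbabilityMeasure_forall_singleton_ne_zero
  let ν : ProbabilityMeasure X := ⟨μ.map z, Measure.isProbabilityMeasure_map .of_discrete⟩
  obtain ⟨m, hm, hfix⟩ := h ν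
  have hinv := congrArg ProbabilityMeasure.toMeasure hfix
  rw [toMeasure_TM_iterate] at hinv
  have hdvd n : minimalPeriod T (z n) ∣ m :=
    (isPeriodicPt_of_forall_exists_iterate_eq (fun n => hper (z n)) hinj
      (exists_apply_eq_of_map_map_eq (hT.measurable.iterate m) hμ hinv) n).minimalPeriod_dvd
  exact infinite_range_of_injective hinj <| (finite_Iic m).subset <|
    range_subset_iff.mpr fun n => Nat.le_of_dvd hm (hdvd n)

end InducedMap

theorem periodic_iff_measures_periodic_general {X : Type*}
    [MetricSpace X] [MeasurableSpace X] [BorelSpace X]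
    (T : X → X) (hT : Continuous T) :
    (IsPeriodicSystem T ↔ IsPeriodicSystem (TM T hT)) ∧
    (IsPeriodicSystem (TM T hT) ↔ IsPointwisePeriodic (TM T hT)) :=
  ⟨⟨(·.TM hT), fun h => isPeriodicSystem_of_isPointwisePeriodic_TM hT h.isPointwisePeriodic_s13⟩,
    ⟨(·.isPointwisePeriodic), fun h => (isPeriodicSystem_of_isPointwisePeriodic_TM hT h).TM hT⟩⟩

theorem periodic_iff_measures_periodic {X : Type*}
    [MetricSpace X] [CompactSpace X] [MeasurableSpace X] [BorelSpace X]
    (T : X → X) (hT : Continuous T) (hTs : Surjective T) :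
    (IsPeriodicSystem T ↔ IsPeriodicSystem (TM T hT)) ∧
    (IsPeriodicSystem (TM T hT) ↔ IsPointwisePeriodic (TM T hT)) :=
  periodic_iff_measures_periodic_general T hT

end Paper
end
end

section
/- If (X,T) and (Y,S) have almost dense periodic sets, then the product system (X × Y, T × S) has almost dense periodic sets. Moreover, having almost dense periodic sets is preserved under factor maps. -/
open MeasureTheory Topology Set Function TopologicalSpace

noncomputable section

namespace Paper

/-! If `μ` is `T^[k]`-invariant and `ν` is `S^[m]`-invariant, then `μ × ν` is invariant under
`(T × S)^[k m]`, and it gives mass at least `1 - ε` to a box `U₁ × U₂ ⊆ U` once `μ` and `ν` give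
mass at least `1 - ε/2` to its sides. A factor map `π` pushes a periodic measure almost carried
by `π⁻¹ V` to a periodic measure almost carried by `V`. -/

/-- A periodic point of the induced map `f_M` on measures. -/
def IsPeriodicMeasure {α : Type*} [MeasurableSpace α] (f : α → α) (μ : Measure α) : Prop :=
  ∃ k : ℕ, 0 < k ∧ MeasurePreserving (f^[k]) μ μ

section PeriodicMeasure

variable {α β : Type*} [MeasurableSpace α] [MeasurableSpace β]

theorem IsPeriodicMeasure.prod {f : α → α} {g : β → β} {μ : Measure α} {ν : Measure β}
    [SFinite μ] [SFinite ν] (hμ : IsPeriodicMeasure f μ) (hν : IsPeriodicMeasure g ν) :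
    IsPeriodicMeasure (Prod.map f g) (μ.prod ν) := by
  obtain ⟨k, hk, hfk⟩ := hμ
  obtain ⟨m, hm, hgm⟩ := hν
  have hf : MeasurePreserving (f^[k * m]) μ μ := by
    rw [iterate_mul]; exact hfk.iterate m
  have hg : MeasurePreserving (g^[k * m]) ν ν := by
    rw [mul_comm, iterate_mul]; exact hgm.iterate k
  exact ⟨k * m, Nat.mul_pos hk hm, Prod.map_iterate f g _ ▸ hf.prod hg⟩

theorem IsPeriodicMeasure.map {f : α → α} {g : β → β} {π : α → β} {μ : Measure α}
    (hπ : Measurable π) (hg : Measurable g) (hπfg : Semiconj π f g)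
    (hμ : IsPeriodicMeasure f μ) : IsPeriodicMeasure g (μ.map π) := by
  obtain ⟨k, hk, hfk⟩ := hμ
  refine ⟨k, hk, hg.iterate k, ?_⟩
  rw [Measure.map_map (hg.iterate k) hπ, ← (hπfg.iterate_right k).comp_eq,
    ← Measure.map_map hπ hfk.measurable, hfk.map_eq]

end PeriodicMeasure

theorem Measure.prod_compl_prod_le {α β : Type*} [MeasurableSpace α] [MeasurableSpace β]
    (μ : Measure α) (ν : Measure β) [IsProbabilityMeasure μ] [IsProbabilityMeasure ν]
    (s : Set α) (t : Set β) : μ.prod ν (s ×ˢ t)ᶜ ≤ μ sᶜ + ν tᶜ :=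
  calc μ.prod ν (s ×ˢ t)ᶜ ≤ μ.prod ν (sᶜ ×ˢ univ) + μ.prod ν (univ ×ˢ tᶜ) := by
        rw [compl_prod_eq_union]; exact measure_union_le _ _
    _ = μ sᶜ + ν tᶜ := by simp only [Measure.prod_prod, measure_univ, mul_one, one_mul]

section AlmostDensePeriodicSets

variable {X Y : Type*} [TopologicalSpace X] [TopologicalSpace Y]

theorem almostDensePeriodicSets_iff [MeasurableSpace X] [BorelSpace X] {T : X → X}
    (hT : Continuous T) :
    AlmostDensePeriodicSets T ↔ ∀ U : Set X, IsOpen U → U.Nonempty → ∀ ε : ℝ, 0 < ε →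
      ∃ μ : Measure X, IsProbabilityMeasure μ ∧ IsPeriodicMeasure T μ ∧
        μ Uᶜ < ENNReal.ofReal ε := by
  obtain rfl := ‹BorelSpace X›.measurable_eq
  -- after the substitution `borel X` is no longer an instance
  let : MeasurableSpace X := borel X
  refine forall₅_congr fun U _ _ ε _ => ⟨?_, ?_⟩
  · rintro ⟨k, hk, μ, hμ, hμk, hU⟩
    exact ⟨μ, hμ, ⟨k, hk, hT.measurable.iterate k, hμk⟩, hU⟩
  · rintro ⟨μ, hμ, ⟨k, hk, hμk⟩, hU⟩
    exact ⟨k, hk, μ, hμ, hμk.map_eq, hU⟩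

theorem AlmostDensePeriodicSets.prod [SecondCountableTopologyEither X Y] {T : X → X}
    {S : Y → Y} (hT : Continuous T) (hS : Continuous S) (hTa : AlmostDensePeriodicSets T)
    (hSa : AlmostDensePeriodicSets S) : AlmostDensePeriodicSets (Prod.map T S) := by
  borelize X Y
  rw [almostDensePeriodicSets_iff hT] at hTa
  rw [almostDensePeriodicSets_iff hS] at hSa
  rw [almostDensePeriodicSets_iff (hT.prodMap hS)]
  rintro U hU ⟨⟨x, y⟩, hxy⟩ ε hε
  obtain ⟨U₁, U₂, hU₁, hU₂, hx, hy, hU₁₂⟩ := isOpen_prod_iff.mp hU x y hxy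
  obtain ⟨μ, hμ, hμT, hμU₁⟩ := hTa U₁ hU₁ ⟨x, hx⟩ (ε / 2) (half_pos hε)
  obtain ⟨ν, hν, hνS, hνU₂⟩ := hSa U₂ hU₂ ⟨y, hy⟩ (ε / 2) (half_pos hε)
  refine ⟨μ.prod ν, inferInstance, hμT.prod hνS, ?_⟩
  calc μ.prod ν Uᶜ ≤ μ.prod ν (U₁ ×ˢ U₂)ᶜ := measure_mono (compl_subset_compl.mpr hU₁₂)
    _ ≤ μ U₁ᶜ + ν U₂ᶜ := Measure.prod_compl_prod_le μ ν U₁ U₂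
    _ < ENNReal.ofReal (ε / 2) + ENNReal.ofReal (ε / 2) := ENNReal.add_lt_add hμU₁ hνU₂
    _ = ENNReal.ofReal ε := by
      rw [← ENNReal.ofReal_add (half_pos hε).le (half_pos hε).le, add_halves]

theorem AlmostDensePeriodicSets.of_isFactorMap {T : X → X} {S : Y → Y} {π : X → Y}
    (hT : Continuous T) (hS : Continuous S) (hπ : IsFactorMap T S π)
    (hTa : AlmostDensePeriodicSets T) : AlmostDensePeriodicSets S := by
  obtain ⟨hπc, hπs, hπTS⟩ := hπ
  borelize X Y
  rw [almostDensePeriodicSets_iff hT] at hTa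
  rw [almostDensePeriodicSets_iff hS]
  rintro V hV ⟨y, hy⟩ ε hε
  obtain ⟨x, rfl⟩ := hπs y
  obtain ⟨μ, hμ, hμT, hμV⟩ := hTa (π ⁻¹' V) (hV.preimage hπc) ⟨x, hy⟩ ε hε
  refine ⟨μ.map π, Measure.isProbabilityMeasure_map hπc.aemeasurable,
    hμT.map hπc.measurable hS.measurable (congrFun hπTS), ?_⟩
  rwa [Measure.map_apply hπc.measurable hV.measurableSet.compl]

end AlmostDensePeriodicSets

theorem almost_dense_periodic_sets_product_and_factor_general {X Y : Type*}
    [MetricSpace X] [MetricSpace Y] [CompactSpace Y]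
    (T : X → X) (S : Y → Y) (hT : Continuous T) (hS : Continuous S) :
    (AlmostDensePeriodicSets T → AlmostDensePeriodicSets S →
      AlmostDensePeriodicSets (Prod.map T S)) ∧
    (∀ π : X → Y, IsFactorMap T S π → AlmostDensePeriodicSets T →
      AlmostDensePeriodicSets S) :=
  ⟨AlmostDensePeriodicSets.prod hT hS, fun _ hπ => .of_isFactorMap hT hS hπ⟩

theorem almost_dense_periodic_sets_product_and_factor {X Y : Type*}
    [MetricSpace X] [CompactSpace X] [MetricSpace Y] [CompactSpace Y]
    (T : X → X) (S : Y → Y) (hT : Continuous T) (hS : Continuous S) :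
    (AlmostDensePeriodicSets T → AlmostDensePeriodicSets S →
      AlmostDensePeriodicSets (Prod.map T S)) ∧
    (∀ π : X → Y, IsFactorMap T S π → AlmostDensePeriodicSets T →
      AlmostDensePeriodicSets S) :=
  almost_dense_periodic_sets_product_and_factor_general T S hT hS

end Paper
end
end
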